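/- Consider the greedy multiscale method: let f* : [ℓ,u] → ℝ be L-Lipschitz, let S ≥ 1, and for each scale s = 1,…,S let x*_s ∈ ℝ^{I_s}, with I_s = 2^{S−s+1} + 1, be the exact samples of f* on the uniform grid with I_s points, with ‖x*_S‖₂ ≤ 1. Suppose the coarsest initialization x_S^0 ∈ ℝ^3 has independent standard normal entries, so E‖x_S^0 − x*_S‖₂ ≤ 2. Suppose iterate convergence holds at each scale, ‖x_s^{K_s} − x*_s‖₂ ≤ q^{K_s}·‖x_s^0 − x*_s‖₂ with rate q ∈ [0,1), and x_s^0 = midpoint linear interpolation of x_{s+1}^{K_{s+1}} for s < S. Then E‖x_1^{K_1} − x*_1‖₂ ≤ q^{K_1}·√(2^{S+1})·(q^{r_S} + (L·(u−ℓ)/2^{S+2})·Σ_{s=1}^{S−1} 2^s·q^{r_s}), where r_s = Σ_{t=2}^{s} K_t with r_1 = 0. -/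

import Mathlib

open Finset MeasureTheory ProbabilityTheory

/-- Uniform grid with `I` points on `[l, u]` (0-indexed): `t[i] = l + i·(u−l)/(I−1)`. -/
noncomputable def unifGrid (l u : ℝ) (I : ℕ) (i : ℕ) : ℝ := l + i * (u - l) / ((I : ℝ) - 1)

/-- Midpoint linear interpolation (0-indexed): even entries copy `x`, odd entries are midpoints. -/
noncomputable def midInterp (x : ℕ → ℝ) (j : ℕ) : ℝ :=
  if j % 2 = 0 then x (j / 2) else (x (j / 2) + x (j / 2 + 1)) / 2

/-- Euclidean norm of the first `n` entries. -/
noncomputable def vnorm (n : ℕ) (x : ℕ → ℝ) : ℝ := Real.sqrt (∑ i ∈ range n, x i ^ 2)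

/-!
Let `d_s` be the error of the initial iterate at scale `s`, and `m = 2^(S-s)`. Midpoint
interpolation is `√2`-Lipschitz for the Euclidean norm, and interpolating the exact samples of
the `L`-Lipschitz `f*` at scale `s + 1` misses those at scale `s` only at the `m` new midpoints,
each by at most `L(u-l)/(2m)`. With the contraction at scale `s + 1` this gives
`d_s ≤ √2 q^{K_{s+1}} d_{s+1} + √m L(u-l)/(2m)`; unrolling this affine recursion bounds the final
error at scale `1` by an affine function of `d_S`. Finally `E d_S² = 3 + ‖x*_S‖² ≤ 4`, and
`√x ≤ (x + 4)/4` gives `E d_S ≤ 2`.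
-/

lemma vnorm_eq_norm (n : ℕ) (x : ℕ → ℝ) :
    vnorm n x = ‖(WithLp.toLp 2 (fun i : Fin n => x i) : EuclideanSpace ℝ (Fin n))‖ := by
  rw [EuclideanSpace.norm_eq, vnorm]
  simp only [Real.norm_eq_abs, sq_abs]
  rw [Fin.sum_univ_eq_sum_range (fun i => x i ^ 2)]

lemma vnorm_nonneg (n : ℕ) (x : ℕ → ℝ) : 0 ≤ vnorm n x := Real.sqrt_nonneg _

lemma vnorm_congr {n : ℕ} {x y : ℕ → ℝ} (h : ∀ i < n, x i = y i) : vnorm n x = vnorm n y := by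
  unfold vnorm
  exact congrArg _ (sum_congr rfl fun i hi => by rw [h i (mem_range.mp hi)])

lemma vnorm_add_le (n : ℕ) (x y : ℕ → ℝ) :
    vnorm n (fun i => x i + y i) ≤ vnorm n x + vnorm n y := by
  simp only [vnorm_eq_norm]
  exact norm_add_le (WithLp.toLp 2 (fun i : Fin n => x i) : EuclideanSpace ℝ (Fin n))
    (WithLp.toLp 2 fun i : Fin n => y i)

lemma vnorm_le_sqrt_sum {n : ℕ} {x y : ℕ → ℝ} (h : ∀ i < n, x i ^ 2 ≤ y i) :
    vnorm n x ≤ √(∑ i ∈ range n, y i) :=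
  Real.sqrt_le_sqrt (sum_le_sum fun i hi => h i (mem_range.mp hi))

lemma sum_range_sq_midInterp_le (d : ℕ → ℝ) (m : ℕ) :
    ∑ j ∈ range (2 * m + 1), midInterp d j ^ 2 ≤
      2 * ∑ i ∈ range (m + 1), d i ^ 2 - d m ^ 2 / 2 := by
  induction m with
  | zero =>
    simp only [mul_zero, zero_add, range_one, sum_singleton, midInterp, Nat.zero_mod, if_true,
      Nat.zero_div]
    nlinarith [sq_nonneg (d 0)]
  | succ m ih =>
    have hodd : midInterp d (2 * m + 1) = (d m + d (m + 1)) / 2 := by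
      rw [midInterp, if_neg (by omega), show (2 * m + 1) / 2 = m by omega]
    have heven : midInterp d (2 * m + 2) = d (m + 1) := by
      rw [midInterp, if_pos (by omega), show (2 * m + 2) / 2 = m + 1 by omega]
    rw [show 2 * (m + 1) + 1 = 2 * m + 1 + 1 + 1 by ring, sum_range_succ, sum_range_succ, hodd,
      heven, sum_range_succ (fun i => d i ^ 2) (m + 1)]
    nlinarith [sq_nonneg (d m - d (m + 1))]

lemma vnorm_midInterp_le (d : ℕ → ℝ) (m : ℕ) :
    vnorm (2 * m + 1) (midInterp d) ≤ √2 * vnorm (m + 1) d := by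
  rw [vnorm, vnorm, ← Real.sqrt_mul zero_le_two]
  exact Real.sqrt_le_sqrt ((sum_range_sq_midInterp_le d m).trans (by nlinarith [sq_nonneg (d m)]))

lemma midInterp_sub (x y : ℕ → ℝ) (j : ℕ) :
    midInterp (fun i => x i - y i) j = midInterp x j - midInterp y j := by
  unfold midInterp
  split <;> ring

lemma unifGrid_mem_Icc {l u : ℝ} (hlu : l ≤ u) {m k : ℕ} (hk : k ≤ m) :
    unifGrid l u (m + 1) k ∈ Set.Icc l u := by
  have hkm : (k : ℝ) / m ≤ 1 := div_le_one_of_le₀ (by exact_mod_cast hk) (Nat.cast_nonneg m)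
  have hk0 : 0 ≤ (k : ℝ) / m := by positivity
  rw [unifGrid, Nat.cast_succ, add_sub_cancel_right, mul_div_right_comm]
  constructor <;> nlinarith

lemma unifGrid_two_mul (l u : ℝ) (m k : ℕ) :
    unifGrid l u (2 * m + 1) (2 * k) = unifGrid l u (m + 1) k := by
  simp only [unifGrid]
  push_cast
  rw [add_sub_cancel_right, add_sub_cancel_right, mul_assoc, mul_div_mul_left _ _ two_ne_zero]

lemma unifGrid_two_mul_add_one (l u : ℝ) (m k : ℕ) :
    unifGrid l u (2 * m + 1) (2 * k + 1) =
      (unifGrid l u (m + 1) k + unifGrid l u (m + 1) (k + 1)) / 2 := by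
  simp only [unifGrid]
  push_cast
  ring

lemma unifGrid_succ_sub (l u : ℝ) (m k : ℕ) :
    unifGrid l u (m + 1) (k + 1) - unifGrid l u (m + 1) k = (u - l) / m := by
  simp only [unifGrid]
  push_cast
  ring

lemma abs_average_sub_apply_midpoint_le {f : ℝ → ℝ} {s : Set ℝ} {L a b : ℝ}
    (hf : ∀ x ∈ s, ∀ y ∈ s, |f x - f y| ≤ L * |x - y|) (ha : a ∈ s) (hb : b ∈ s)
    (hab : (a + b) / 2 ∈ s) :
    |(f a + f b) / 2 - f ((a + b) / 2)| ≤ L * |b - a| / 2 := by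
  have hfa := hf a ha _ hab
  have hfb := hf b hb _ hab
  rw [show a - (a + b) / 2 = -((b - a) / 2) by ring, abs_neg, abs_div, abs_two] at hfa
  rw [show b - (a + b) / 2 = (b - a) / 2 by ring, abs_div, abs_two] at hfb
  calc |(f a + f b) / 2 - f ((a + b) / 2)|
      = |(f a - f ((a + b) / 2)) + (f b - f ((a + b) / 2))| / 2 := by
        rw [← abs_two, ← abs_div, abs_two]; ring_nf
    _ ≤ L * |b - a| / 2 := by
        rw [div_le_div_iff_of_pos_right two_pos]
        linarith [abs_add_le (f a - f ((a + b) / 2)) (f b - f ((a + b) / 2))]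

lemma sum_range_two_mul_add_one_ite_even (m : ℕ) (c : ℝ) :
    ∑ j ∈ range (2 * m + 1), (if j % 2 = 0 then 0 else c) = m * c := by
  induction m with
  | zero => simp
  | succ m ih =>
    rw [show 2 * (m + 1) + 1 = 2 * m + 1 + 1 + 1 by ring, sum_range_succ, sum_range_succ, ih,
      if_neg (by omega), if_pos (by omega)]
    push_cast
    ring

lemma vnorm_midInterp_samples_sub_le {f : ℝ → ℝ} {l u L : ℝ} (hlu : l ≤ u) (hL : 0 ≤ L)
    (hf : ∀ a ∈ Set.Icc l u, ∀ b ∈ Set.Icc l u, |f a - f b| ≤ L * |a - b|) (m : ℕ) :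
    vnorm (2 * m + 1) (fun j => midInterp (fun i => f (unifGrid l u (m + 1) i)) j -
        f (unifGrid l u (2 * m + 1) j)) ≤ √m * (L * (u - l) / (2 * m)) := by
  set c := L * (u - l) / (2 * m)
  have hc : 0 ≤ c := div_nonneg (mul_nonneg hL (sub_nonneg.2 hlu)) (by positivity)
  have hentry : ∀ j < 2 * m + 1, (midInterp (fun i => f (unifGrid l u (m + 1) i)) j -
      f (unifGrid l u (2 * m + 1) j)) ^ 2 ≤ if j % 2 = 0 then 0 else c ^ 2 := by
    intro j hj
    obtain ⟨k, rfl | rfl⟩ := Nat.even_or_odd' j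
    · rw [midInterp, if_pos (by omega), if_pos (by omega), Nat.mul_div_cancel_left k two_pos,
        unifGrid_two_mul, sub_self]
      norm_num
    · rw [midInterp, if_neg (by omega), if_neg (by omega),
        show (2 * k + 1) / 2 = k by omega, unifGrid_two_mul_add_one]
      have hmid := unifGrid_mem_Icc hlu (m := 2 * m) (k := 2 * k + 1) (by omega)
      rw [unifGrid_two_mul_add_one] at hmid
      have herr := abs_average_sub_apply_midpoint_le hf (unifGrid_mem_Icc hlu (by omega))
        (unifGrid_mem_Icc hlu (by omega)) hmid
      rw [unifGrid_succ_sub, abs_of_nonneg (div_nonneg (sub_nonneg.2 hlu) (Nat.cast_nonneg m)),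
        show L * ((u - l) / m) / 2 = c by ring] at herr
      exact sq_le_sq' (abs_le.1 herr).1 (abs_le.1 herr).2
  calc _ ≤ √(∑ j ∈ range (2 * m + 1), if j % 2 = 0 then 0 else c ^ 2) := vnorm_le_sqrt_sum hentry
    _ = √m * c := by
      rw [sum_range_two_mul_add_one_ite_even, Real.sqrt_mul (Nat.cast_nonneg m), Real.sqrt_sq hc]

lemma vnorm_midInterp_sub_samples_le {f : ℝ → ℝ} {l u L : ℝ} (hlu : l ≤ u) (hL : 0 ≤ L)
    (hf : ∀ a ∈ Set.Icc l u, ∀ b ∈ Set.Icc l u, |f a - f b| ≤ L * |a - b|) (m : ℕ) (x : ℕ → ℝ) :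
    vnorm (2 * m + 1) (fun j => midInterp x j - f (unifGrid l u (2 * m + 1) j)) ≤
      √2 * vnorm (m + 1) (fun i => x i - f (unifGrid l u (m + 1) i)) +
        √m * (L * (u - l) / (2 * m)) := by
  set y := fun i => f (unifGrid l u (m + 1) i)
  calc _ = vnorm (2 * m + 1) (fun j => midInterp (fun i => x i - y i) j +
        (midInterp y j - f (unifGrid l u (2 * m + 1) j))) :=
        vnorm_congr fun j _ => by rw [midInterp_sub]; ring
    _ ≤ _ := (vnorm_add_le _ _ _).trans (add_le_add (vnorm_midInterp_le _ m)
        (vnorm_midInterp_samples_sub_le hlu hL hf m))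

lemma le_prod_mul_add_sum_of_le_mul_add {e a b : ℕ → ℝ} {m n : ℕ} (hmn : m ≤ n)
    (ha : ∀ k ∈ Ico m n, 0 ≤ a k) (h : ∀ k ∈ Ico m n, e k ≤ a k * e (k + 1) + b k) :
    e m ≤ (∏ k ∈ Ico m n, a k) * e n + ∑ k ∈ Ico m n, (∏ j ∈ Ico m k, a j) * b k := by
  induction n, hmn using Nat.le_induction with
  | base => simp
  | succ n hmn ih =>
    have hsub : Ico m n ⊆ Ico m (n + 1) := Ico_subset_Ico_right n.le_succ
    have hn : n ∈ Ico m (n + 1) := mem_Ico.2 ⟨hmn, n.lt_succ_self⟩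
    have hP : 0 ≤ ∏ k ∈ Ico m n, a k := prod_nonneg fun k hk => ha k (hsub hk)
    calc e m ≤ (∏ k ∈ Ico m n, a k) * e n + ∑ k ∈ Ico m n, (∏ j ∈ Ico m k, a j) * b k :=
          ih (fun k hk => ha k (hsub hk)) (fun k hk => h k (hsub hk))
      _ ≤ (∏ k ∈ Ico m n, a k) * (a n * e (n + 1) + b n) +
            ∑ k ∈ Ico m n, (∏ j ∈ Ico m k, a j) * b k := by gcongr; exact h n hn
      _ = _ := by rw [prod_Ico_succ_top hmn, sum_Ico_succ_top hmn]; ring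

lemma prod_Ico_one_mul_pow (c q : ℝ) (K : ℕ → ℕ) (k : ℕ) :
    ∏ j ∈ Ico 1 k, c * q ^ K (j + 1) = c ^ (k - 1) * q ^ ∑ t ∈ Icc 2 k, K t := by
  rw [prod_mul_distrib, prod_const, Nat.card_Ico, prod_pow_eq_pow_sum, sum_Ico_add' K 1 k 1,
    Ico_add_one_right_eq_Icc]

lemma sqrt_pow_of_nonneg {x : ℝ} (hx : 0 ≤ x) (n : ℕ) : √(x ^ n) = √x ^ n := by
  rw [← Real.sqrt_sq (pow_nonneg (Real.sqrt_nonneg x) n), ← pow_mul, mul_comm, pow_mul,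
    Real.sq_sqrt hx]

lemma sqrt_two_pow_sub_one_mul_sqrt_two_pow_div {S s : ℕ} (hs : 1 ≤ s) (hsS : s ≤ S) :
    √2 ^ (s - 1) * √(2 ^ (S - s)) / (2 * 2 ^ (S - s)) = √(2 ^ (S + 1)) * 2 ^ s / 2 ^ (S + 2) := by
  obtain ⟨k, rfl⟩ : ∃ k, s = k + 1 := ⟨s - 1, by omega⟩
  obtain ⟨n, rfl⟩ : ∃ n, S = k + 1 + n := ⟨S - (k + 1), by omega⟩
  rw [show k + 1 - 1 = k by omega, show k + 1 + n - (k + 1) = n by omega,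
    sqrt_pow_of_nonneg zero_le_two, sqrt_pow_of_nonneg zero_le_two]
  set r := √2
  have hr : (2 : ℝ) = r ^ 2 := (Real.sq_sqrt zero_le_two).symm
  have hr0 : r ≠ 0 := by positivity
  rw [hr]
  field_simp
  ring

lemma vnorm_initial_error_le_of_warm_start {f : ℝ → ℝ} {l u L q : ℝ} {S s : ℕ} {K : ℕ → ℕ}
    {xstar x0 xK : ℕ → ℕ → ℝ} (hlu : l ≤ u) (hL : 0 ≤ L)
    (hf : ∀ a ∈ Set.Icc l u, ∀ b ∈ Set.Icc l u, |f a - f b| ≤ L * |a - b|)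
    (hs : 1 ≤ s) (hsS : s < S)
    (hxstar : ∀ s, 1 ≤ s → s ≤ S → ∀ i < 2 ^ (S - s + 1) + 1,
      xstar s i = f (unifGrid l u (2 ^ (S - s + 1) + 1) i))
    (hconv : vnorm (2 ^ (S - (s + 1) + 1) + 1) (fun i => xK (s + 1) i - xstar (s + 1) i) ≤
      q ^ K (s + 1) * vnorm (2 ^ (S - (s + 1) + 1) + 1) (fun i => x0 (s + 1) i - xstar (s + 1) i))
    (hwarm : ∀ j < 2 ^ (S - s + 1) + 1, x0 s j = midInterp (xK (s + 1)) j) :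
    vnorm (2 ^ (S - s + 1) + 1) (fun i => x0 s i - xstar s i) ≤
      √2 * q ^ K (s + 1) *
          vnorm (2 ^ (S - (s + 1) + 1) + 1) (fun i => x0 (s + 1) i - xstar (s + 1) i) +
        √(2 ^ (S - s)) * (L * (u - l) / (2 * 2 ^ (S - s))) := by
  set m := 2 ^ (S - s)
  have hfine : 2 ^ (S - s + 1) + 1 = 2 * m + 1 := by rw [pow_succ, mul_comm]
  have hcoarse : 2 ^ (S - (s + 1) + 1) + 1 = m + 1 := by rw [show S - (s + 1) + 1 = S - s by omega]
  have hm : ((2 : ℝ) ^ (S - s)) = m := by simp [m]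
  rw [hcoarse] at hconv ⊢
  rw [hm, hfine]
  calc vnorm (2 * m + 1) (fun i => x0 s i - xstar s i)
      = vnorm (2 * m + 1) (fun j => midInterp (xK (s + 1)) j - f (unifGrid l u (2 * m + 1) j)) :=
        vnorm_congr fun j hj => by
          rw [hwarm j (hfine ▸ hj), hxstar s hs hsS.le j (hfine ▸ hj), hfine]
    _ ≤ √2 * vnorm (m + 1) (fun i => xK (s + 1) i - f (unifGrid l u (m + 1) i)) +
          √m * (L * (u - l) / (2 * m)) := vnorm_midInterp_sub_samples_le hlu hL hf m _
    _ = √2 * vnorm (m + 1) (fun i => xK (s + 1) i - xstar (s + 1) i) +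
          √m * (L * (u - l) / (2 * m)) := by
        congr 2
        refine vnorm_congr fun i hi => ?_
        rw [hxstar (s + 1) (by omega) hsS i (hcoarse ▸ hi), hcoarse]
    _ ≤ _ := by rw [mul_assoc]; gcongr

theorem vnorm_finest_error_le {f : ℝ → ℝ} {l u L q : ℝ} {S : ℕ} {K : ℕ → ℕ}
    {xstar x0 xK : ℕ → ℕ → ℝ} (hlu : l ≤ u) (hL : 0 ≤ L) (hS : 1 ≤ S) (hq0 : 0 ≤ q)
    (hf : ∀ a ∈ Set.Icc l u, ∀ b ∈ Set.Icc l u, |f a - f b| ≤ L * |a - b|)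
    (hxstar : ∀ s, 1 ≤ s → s ≤ S → ∀ i < 2 ^ (S - s + 1) + 1,
      xstar s i = f (unifGrid l u (2 ^ (S - s + 1) + 1) i))
    (hconv : ∀ s, 1 ≤ s → s ≤ S →
      vnorm (2 ^ (S - s + 1) + 1) (fun i => xK s i - xstar s i) ≤
        q ^ K s * vnorm (2 ^ (S - s + 1) + 1) (fun i => x0 s i - xstar s i))
    (hwarm : ∀ s, 1 ≤ s → s < S → ∀ j < 2 ^ (S - s + 1) + 1, x0 s j = midInterp (xK (s + 1)) j) :
    vnorm (2 ^ S + 1) (fun i => xK 1 i - xstar 1 i) ≤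
      q ^ K 1 * √(2 ^ (S + 1)) *
        (q ^ (∑ t ∈ Icc 2 S, K t) * vnorm 3 (fun i => x0 S i - xstar S i) / 2 +
          L * (u - l) / 2 ^ (S + 2) * ∑ s ∈ Icc 1 (S - 1), 2 ^ s * q ^ (∑ t ∈ Icc 2 s, K t)) := by
  set d := fun s => vnorm (2 ^ (S - s + 1) + 1) (fun i => x0 s i - xstar s i)
  have hunroll := le_prod_mul_add_sum_of_le_mul_add (e := d) (a := fun s => √2 * q ^ K (s + 1))
    (b := fun s => √(2 ^ (S - s)) * (L * (u - l) / (2 * 2 ^ (S - s)))) hS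
    (fun _ _ => by positivity) fun s hs =>
      vnorm_initial_error_le_of_warm_start hlu hL hf (mem_Ico.1 hs).1 (mem_Ico.1 hs).2 hxstar
        (hconv (s + 1) (by omega) (mem_Ico.1 hs).2) (hwarm s (mem_Ico.1 hs).1 (mem_Ico.1 hs).2)
  simp only [prod_Ico_one_mul_pow] at hunroll
  have hfinest : vnorm (2 ^ S + 1) (fun i => xK 1 i - xstar 1 i) ≤ q ^ K 1 * d 1 := by
    simpa [d, Nat.sub_add_cancel hS] using hconv 1 le_rfl hS
  have hcoarsest : d S = vnorm 3 (fun i => x0 S i - xstar S i) := by simp [d]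
  have hfirst : √2 ^ (S - 1) = √(2 ^ (S + 1)) / 2 := by
    rw [sqrt_pow_of_nonneg zero_le_two, show S + 1 = S - 1 + 2 by omega, pow_add,
      Real.sq_sqrt zero_le_two]
    ring
  have hsum : ∑ s ∈ Ico 1 S, √2 ^ (s - 1) * q ^ (∑ t ∈ Icc 2 s, K t) *
        (√(2 ^ (S - s)) * (L * (u - l) / (2 * 2 ^ (S - s)))) =
      √(2 ^ (S + 1)) * (L * (u - l) / 2 ^ (S + 2)) *
        ∑ s ∈ Icc 1 (S - 1), 2 ^ s * q ^ (∑ t ∈ Icc 2 s, K t) := by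
    rw [mul_sum, show Icc 1 (S - 1) = Ico 1 S by ext; simp only [mem_Icc, mem_Ico]; omega]
    refine sum_congr rfl fun s hs => ?_
    linear_combination (q ^ (∑ t ∈ Icc 2 s, K t) * (L * (u - l))) *
      sqrt_two_pow_sub_one_mul_sqrt_two_pow_div (mem_Ico.1 hs).1 (mem_Ico.1 hs).2.le
  calc _ ≤ q ^ K 1 * d 1 := hfinest
    _ ≤ _ := mul_le_mul_of_nonneg_left hunroll (by positivity)
    _ = _ := by rw [hcoarsest, hfirst, hsum]; ring

section

variable {Ω : Type*} [MeasurableSpace Ω] {μ : Measure Ω}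

lemma integral_sub_sq_gaussianReal (m : ℝ) (v : NNReal) (c : ℝ) :
    ∫ x, (x - c) ^ 2 ∂gaussianReal m v = v + (m - c) ^ 2 := by
  have hvar := variance_eq_sub (memLp_id_gaussianReal (μ := m - c) (v := v) 2)
  simp only [variance_id_gaussianReal, Pi.pow_apply, id_eq, integral_id_gaussianReal] at hvar
  rw [← gaussianReal_map_sub_const c, integral_map (by fun_prop) (by fun_prop)] at hvar
  linarith

lemma integrable_sub_sq_gaussianReal (m : ℝ) (v : NNReal) (c : ℝ) :
    Integrable (fun x => (x - c) ^ 2) (gaussianReal m v) :=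
  ((memLp_id_gaussianReal 2).sub (memLp_const c)).integrable_sq

lemma integrable_and_integral_sum_sq_sub_of_gaussian {X : Ω → ℕ → ℝ} {n : ℕ}
    (hmeas : ∀ i, Measurable fun ω => X ω i)
    (hlaw : ∀ i < n, μ.map (fun ω => X ω i) = gaussianReal 0 1) (c : ℕ → ℝ) :
    Integrable (fun ω => ∑ i ∈ range n, (X ω i - c i) ^ 2) μ ∧
      ∫ ω, ∑ i ∈ range n, (X ω i - c i) ^ 2 ∂μ = n + ∑ i ∈ range n, c i ^ 2 := by
  have hcoord : ∀ i ∈ range n, Integrable (fun ω => (X ω i - c i) ^ 2) μ ∧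
      ∫ ω, (X ω i - c i) ^ 2 ∂μ = 1 + c i ^ 2 := fun i hi => by
    have hsq : AEStronglyMeasurable (fun x : ℝ => (x - c i) ^ 2) (μ.map fun ω => X ω i) := by
      fun_prop
    constructor
    · have h := integrable_sub_sq_gaussianReal 0 1 (c i)
      rw [← hlaw i (mem_range.1 hi)] at h
      exact (integrable_map_measure hsq (hmeas i).aemeasurable).1 h
    · have h := integral_sub_sq_gaussianReal 0 1 (c i)
      rw [← hlaw i (mem_range.1 hi), integral_map (hmeas i).aemeasurable hsq] at h
      simpa using h
  refine ⟨integrable_finsetSum _ fun i hi => (hcoord i hi).1, ?_⟩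
  rw [integral_finsetSum _ fun i hi => (hcoord i hi).1, sum_congr rfl fun i hi => (hcoord i hi).2,
    sum_add_distrib]
  simp

lemma integrable_and_integral_sqrt_le [IsProbabilityMeasure μ] {Q : Ω → ℝ} (hQ : Integrable Q μ)
    (hQ0 : ∀ ω, 0 ≤ Q ω) {c : ℝ} (hc : 0 < c) (h : ∫ ω, Q ω ∂μ ≤ c ^ 2) :
    Integrable (fun ω => √(Q ω)) μ ∧ ∫ ω, √(Q ω) ∂μ ≤ c := by
  have hamgm : ∀ ω, √(Q ω) ≤ (Q ω + c ^ 2) / (2 * c) := fun ω => by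
    rw [le_div_iff₀ (by positivity)]
    nlinarith [sq_nonneg (√(Q ω) - c), Real.sq_sqrt (hQ0 ω)]
  have hbound : Integrable (fun ω => (Q ω + c ^ 2) / (2 * c)) μ :=
    (hQ.add (integrable_const _)).div_const _
  have hint : Integrable (fun ω => √(Q ω)) μ :=
    hbound.mono' (Real.continuous_sqrt.comp_aestronglyMeasurable hQ.1) <|
      Filter.Eventually.of_forall fun ω => by
        rw [Real.norm_eq_abs, abs_of_nonneg (Real.sqrt_nonneg _)]
        exact hamgm ω
  refine ⟨hint, ?_⟩
  calc ∫ ω, √(Q ω) ∂μ ≤ ∫ ω, (Q ω + c ^ 2) / (2 * c) ∂μ := integral_mono hint hbound hamgm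
    _ = ((∫ ω, Q ω ∂μ) + c ^ 2) / (2 * c) := by
      rw [integral_div, integral_add hQ (integrable_const _), integral_const, probReal_univ,
        one_smul]
    _ ≤ c := by rw [div_le_iff₀ (by positivity)]; nlinarith

lemma integrable_and_integral_vnorm_sub_le [IsProbabilityMeasure μ] {X : Ω → ℕ → ℝ} {n : ℕ}
    (hn : 0 < n) (hmeas : ∀ i, Measurable fun ω => X ω i)
    (hlaw : ∀ i < n, μ.map (fun ω => X ω i) = gaussianReal 0 1) (c : ℕ → ℝ) :
    Integrable (fun ω => vnorm n (fun i => X ω i - c i)) μ ∧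
      ∫ ω, vnorm n (fun i => X ω i - c i) ∂μ ≤ √(n + vnorm n c ^ 2) := by
  obtain ⟨hQ, hQval⟩ := integrable_and_integral_sum_sq_sub_of_gaussian hmeas hlaw c
  have hc2 : vnorm n c ^ 2 = ∑ i ∈ range n, c i ^ 2 :=
    Real.sq_sqrt (sum_nonneg fun i _ => sq_nonneg _)
  refine integrable_and_integral_sqrt_le hQ (fun ω => sum_nonneg fun i _ => sq_nonneg _)
    (by positivity) ?_
  rw [hQval, Real.sq_sqrt (by positivity), hc2]

lemma integral_le_mul_add_of_le [IsProbabilityMeasure μ] {f g : Ω → ℝ} {A B c : ℝ}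
    (hf : ∀ ω, 0 ≤ f ω) (hg : Integrable g μ) (hA : 0 ≤ A) (hfg : ∀ ω, f ω ≤ A * g ω + B)
    (hgc : ∫ ω, g ω ∂μ ≤ c) : ∫ ω, f ω ∂μ ≤ A * c + B := by
  calc ∫ ω, f ω ∂μ ≤ ∫ ω, A * g ω + B ∂μ :=
        integral_mono_of_nonneg (.of_forall hf) ((hg.const_mul A).add (integrable_const B))
          (.of_forall hfg)
    _ = A * ∫ ω, g ω ∂μ + B := by
      rw [integral_add (hg.const_mul A) (integrable_const B), integral_const_mul, integral_const,
        probReal_univ, one_smul]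
    _ ≤ A * c + B := by gcongr

end

theorem expected_greedy_multiscale_convergence_general
    (l u : ℝ) (hlu : l < u) (S : ℕ) (hS : 1 ≤ S)
    {Ω : Type*} [MeasurableSpace Ω] (μ : Measure Ω) [IsProbabilityMeasure μ]
    (fstar : ℝ → ℝ) (L q : ℝ) (hq0 : 0 ≤ q)
    (hfLip : ∀ a ∈ Set.Icc l u, ∀ b ∈ Set.Icc l u, |fstar a - fstar b| ≤ L * |a - b|)
    (K : ℕ → ℕ)
    (xstar : ℕ → ℕ → ℝ) (x0 xK : Ω → ℕ → ℕ → ℝ)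
    (hxstar : ∀ s, 1 ≤ s → s ≤ S → ∀ i < 2 ^ (S - s + 1) + 1,
      xstar s i = fstar (unifGrid l u (2 ^ (S - s + 1) + 1) i))
    (hxstarS : vnorm 3 (xstar S) ≤ 1)
    (hmeas : ∀ i, Measurable fun ω => x0 ω S i)
    (hlaw : ∀ i < 3, Measure.map (fun ω => x0 ω S i) μ = gaussianReal 0 1)
    (hconv : ∀ ω, ∀ s, 1 ≤ s → s ≤ S →
      vnorm (2 ^ (S - s + 1) + 1) (fun i => xK ω s i - xstar s i) ≤
        q ^ K s * vnorm (2 ^ (S - s + 1) + 1) (fun i => x0 ω s i - xstar s i))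
    (hwarm : ∀ ω, ∀ s, 1 ≤ s → s < S → ∀ j < 2 ^ (S - s + 1) + 1,
      x0 ω s j = midInterp (xK ω (s + 1)) j) :
    (∫ ω, vnorm 3 (fun i => x0 ω S i - xstar S i) ∂μ ≤ 2) ∧
    (∫ ω, vnorm (2 ^ S + 1) (fun i => xK ω 1 i - xstar 1 i) ∂μ ≤
      q ^ K 1 * Real.sqrt ((2 : ℝ) ^ (S + 1)) *
        (q ^ (∑ t ∈ Finset.Icc 2 S, K t) +
          L * (u - l) / 2 ^ (S + 2) *
            ∑ s ∈ Finset.Icc 1 (S - 1), (2 : ℝ) ^ s * q ^ (∑ t ∈ Finset.Icc 2 s, K t))) := by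
  have hL : 0 ≤ L := nonneg_of_mul_nonneg_left
    ((abs_nonneg _).trans ((hfLip u ⟨hlu.le, le_rfl⟩ l ⟨le_rfl, hlu.le⟩).trans_eq
      (by rw [abs_of_pos (sub_pos.2 hlu)]))) (sub_pos.2 hlu)
  obtain ⟨hεint, hε⟩ := integrable_and_integral_vnorm_sub_le three_pos hmeas hlaw (xstar S)
  have hε2 : ∫ ω, vnorm 3 (fun i => x0 ω S i - xstar S i) ∂μ ≤ 2 :=
    hε.trans (Real.sqrt_le_iff.2 ⟨zero_le_two, by push_cast; nlinarith [vnorm_nonneg 3 (xstar S)]⟩)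
  refine ⟨hε2, ?_⟩
  set C := q ^ K 1 * √(2 ^ (S + 1))
  calc _ ≤ C * q ^ (∑ t ∈ Icc 2 S, K t) / 2 * 2 +
        C * (L * (u - l) / 2 ^ (S + 2) * ∑ s ∈ Icc 1 (S - 1), 2 ^ s * q ^ (∑ t ∈ Icc 2 s, K t)) :=
      integral_le_mul_add_of_le (fun ω => vnorm_nonneg _ _) hεint (by positivity)
        (fun ω => (vnorm_finest_error_le hlu.le hL hS hq0 hfLip hxstar (hconv ω) (hwarm ω)).trans_eq
          (by ring)) hε2
    _ = _ := by ring

/-- Expected greedy multiscale convergence from a standard Gaussian initialization at the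
coarsest scale `S` (which has `I_S = 3` points); scale `s` has `I_s = 2^(S−s+1) + 1` points. -/
theorem expected_greedy_multiscale_convergence
    (l u : ℝ) (hlu : l < u) (S : ℕ) (hS : 1 ≤ S)
    {Ω : Type*} [MeasurableSpace Ω] (μ : Measure Ω) [IsProbabilityMeasure μ]
    (fstar : ℝ → ℝ) (L q : ℝ) (hq0 : 0 ≤ q) (hq1 : q < 1)
    (hfLip : ∀ a ∈ Set.Icc l u, ∀ b ∈ Set.Icc l u, |fstar a - fstar b| ≤ L * |a - b|)
    (K : ℕ → ℕ)
    (xstar : ℕ → ℕ → ℝ) (x0 xK : Ω → ℕ → ℕ → ℝ)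
    (hxstar : ∀ s, 1 ≤ s → s ≤ S → ∀ i < 2 ^ (S - s + 1) + 1,
      xstar s i = fstar (unifGrid l u (2 ^ (S - s + 1) + 1) i))
    (hxstarS : vnorm 3 (xstar S) ≤ 1)
    (hmeas : ∀ i, Measurable fun ω => x0 ω S i)
    (hlaw : ∀ i < 3, Measure.map (fun ω => x0 ω S i) μ = gaussianReal 0 1)
    (hindep : iIndepFun
      (fun i : Fin 3 => fun ω => x0 ω S i.val) μ)
    (hconv : ∀ ω, ∀ s, 1 ≤ s → s ≤ S →
      vnorm (2 ^ (S - s + 1) + 1) (fun i => xK ω s i - xstar s i) ≤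
        q ^ K s * vnorm (2 ^ (S - s + 1) + 1) (fun i => x0 ω s i - xstar s i))
    (hwarm : ∀ ω, ∀ s, 1 ≤ s → s < S → ∀ j < 2 ^ (S - s + 1) + 1,
      x0 ω s j = midInterp (xK ω (s + 1)) j) :
    (∫ ω, vnorm 3 (fun i => x0 ω S i - xstar S i) ∂μ ≤ 2) ∧
    (∫ ω, vnorm (2 ^ S + 1) (fun i => xK ω 1 i - xstar 1 i) ∂μ ≤
      q ^ K 1 * Real.sqrt ((2 : ℝ) ^ (S + 1)) *
        (q ^ (∑ t ∈ Finset.Icc 2 S, K t) +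
          L * (u - l) / 2 ^ (S + 2) *
            ∑ s ∈ Finset.Icc 1 (S - 1), (2 : ℝ) ^ s * q ^ (∑ t ∈ Finset.Icc 2 s, K t))) :=
  expected_greedy_multiscale_convergence_general l u hlu S hS μ fstar L q hq0 hfLip K xstar x0 xK
    hxstar hxstarS hmeas hlaw hconv hwarm
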